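/- arXiv:2603.24999 — 2 statements merged into one kernel-verified Lean document; each statement's English description precedes it below -/
import Mathlib

section
/- (Min–max characterization of isotonic regression / correctness of PAVA output.) Let n ≥ 1, y : Fin n → ℝ, and let ŷ be the metric projection of y onto the monotone cone K = { v | r ≤ s implies v r ≤ v s } in EuclideanSpace ℝ (Fin n). Then for every index k, ŷ k = max over s ≤ k of ( min over t ≥ k of Avg(y; s, t) ), where Avg(y; s, t) = (∑_{r = s}^{t} y r)/(t − s + 1) is the average of y over the index block from s to t. -/
/-!
The projection `ŷ` is characterised by the variational inequality `⟪y - ŷ, u - ŷ⟫ ≤ 0` for all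
monotone `u`. Testing it with `u = ŷ ± δ • 1_U` for upper sets `U` shows that the residual
`y - ŷ` has nonpositive sum over every upper set, and zero sum over every upper set across whose
boundary `ŷ` jumps strictly. If `[s₀, t₀]` is the level block of `ŷ` through `k`, the residual
sum over `[s₀, t]` (resp. `[s, t₀]`) is therefore `≥ 0` (resp. `≤ 0`) whenever `s ≤ k ≤ t`,
so `Avg(y; s₀, t) ≥ ŷ k ≥ Avg(y; s, t₀)`, and these two bounds give the two inequalities of the
max–min formula.
-/

/-- Block average of `y` over the index block from `s` to `t`. -/
noncomputable def blockAvg {n : ℕ} (y : Fin n → ℝ) (s t : Fin n) : ℝ :=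
  (∑ r ∈ Finset.Icc s t, y r) / (((t : ℕ) - (s : ℕ) + 1 : ℕ) : ℝ)

open Finset Topology
open scoped InnerProductSpace

theorem real_inner_sub_le_zero_of_forall_norm_le {F : Type*} [NormedAddCommGroup F]
    [InnerProductSpace ℝ F] {K : Set F} (hK : Convex ℝ K) {y v : F} (hv : v ∈ K)
    (hmin : ∀ u ∈ K, ‖y - v‖ ≤ ‖y - u‖) {u : F} (hu : u ∈ K) : ⟪y - v, u - v⟫_ℝ ≤ 0 := by
  refine (norm_eq_iInf_iff_real_inner_le_zero hK hv).1 ?_ u hu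
  have : Nonempty K := ⟨⟨v, hv⟩⟩
  refine le_antisymm (le_ciInf fun w => hmin w w.2) (ciInf_le ?_ (⟨v, hv⟩ : K))
  exact ⟨0, Set.forall_mem_range.2 fun w => norm_nonneg _⟩

section IndicatorVec

variable {ι : Type*} [DecidableEq ι]

def indicatorVec (U : Finset ι) : EuclideanSpace ℝ ι :=
  WithLp.toLp 2 fun r => if r ∈ U then 1 else 0

@[simp]
theorem indicatorVec_apply (U : Finset ι) (r : ι) :
    indicatorVec U r = if r ∈ U then 1 else 0 := rfl

theorem real_inner_indicatorVec [Fintype ι] (g : EuclideanSpace ℝ ι) (U : Finset ι) :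
    ⟪g, indicatorVec U⟫_ℝ = ∑ r ∈ U, g r := by
  simp [PiLp.inner_apply, Finset.sum_ite_mem]

end IndicatorVec

section MonotoneCone

variable {ι : Type*} [Preorder ι]

def monotoneCone (ι : Type*) [Preorder ι] : Set (EuclideanSpace ℝ ι) :=
  {v | ∀ r s : ι, r ≤ s → v r ≤ v s}

theorem convex_monotoneCone : Convex ℝ (monotoneCone ι) := by
  intro u hu v hv a b ha hb _ r s hrs
  simp only [PiLp.add_apply, PiLp.smul_apply, smul_eq_mul]
  gcongr
  exacts [hu r s hrs, hv r s hrs]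

theorem add_smul_indicatorVec_mem_monotoneCone [DecidableEq ι] {v : EuclideanSpace ℝ ι}
    (hv : v ∈ monotoneCone ι) {U : Finset ι} (hU : IsUpperSet (U : Set ι)) {a : ℝ}
    (hjump : ∀ r s, r ≤ s → r ∉ U → s ∈ U → v r ≤ v s + a) :
    v + a • indicatorVec U ∈ monotoneCone ι := by
  intro r s hrs
  by_cases hr : r ∈ U
  · have hs : s ∈ U := hU hrs hr
    simpa [hr, hs] using hv r s hrs
  by_cases hs : s ∈ U
  · simpa [hr, hs] using hjump r s hrs hr hs
  · simpa [hr, hs] using hv r s hrs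

variable [Fintype ι] {y yhat : EuclideanSpace ℝ ι}

variable [DecidableEq ι]

theorem mul_sum_sub_nonpos_of_isUpperSet (hK : yhat ∈ monotoneCone ι)
    (hmin : ∀ u ∈ monotoneCone ι, ‖y - yhat‖ ≤ ‖y - u‖) {U : Finset ι}
    (hU : IsUpperSet (U : Set ι)) {a : ℝ}
    (hjump : ∀ r s, r ≤ s → r ∉ U → s ∈ U → yhat r ≤ yhat s + a) :
    a * ∑ r ∈ U, (y r - yhat r) ≤ 0 := by
  have := real_inner_sub_le_zero_of_forall_norm_le convex_monotoneCone hK hmin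
    (add_smul_indicatorVec_mem_monotoneCone hK hU hjump)
  simpa [real_inner_smul_right, real_inner_indicatorVec] using this

theorem sum_sub_nonpos_of_isUpperSet (hK : yhat ∈ monotoneCone ι)
    (hmin : ∀ u ∈ monotoneCone ι, ‖y - yhat‖ ≤ ‖y - u‖) {U : Finset ι}
    (hU : IsUpperSet (U : Set ι)) : ∑ r ∈ U, (y r - yhat r) ≤ 0 := by
  simpa using mul_sum_sub_nonpos_of_isUpperSet hK hmin hU (a := 1)
    fun r s hrs _ _ => (hK r s hrs).trans (le_add_of_nonneg_right zero_le_one)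

theorem sum_sub_eq_zero_of_isUpperSet (hK : yhat ∈ monotoneCone ι)
    (hmin : ∀ u ∈ monotoneCone ι, ‖y - yhat‖ ≤ ‖y - u‖) {U : Finset ι}
    (hU : IsUpperSet (U : Set ι)) (hsep : ∀ r ∉ U, ∀ s ∈ U, yhat r < yhat s) :
    ∑ r ∈ U, (y r - yhat r) = 0 := by
  refine le_antisymm (sum_sub_nonpos_of_isUpperSet hK hmin hU) ?_
  obtain ⟨δ, hgap, hδ⟩ : ∃ δ, (∀ r ∉ U, ∀ s ∈ U, yhat r + δ ≤ yhat s) ∧ 0 < δ := by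
    have : ∀ᶠ δ in 𝓝 (0 : ℝ), ∀ r ∉ U, ∀ s ∈ U, yhat r + δ ≤ yhat s := by
      simp only [Filter.eventually_all]
      intro r hr s hs
      filter_upwards [eventually_le_nhds (sub_pos.2 (hsep r hr s hs))] with δ hδ
      linarith
    exact ((this.filter_mono nhdsWithin_le_nhds).and
      (self_mem_nhdsWithin (s := Set.Ioi 0))).exists
  have := mul_sum_sub_nonpos_of_isUpperSet hK hmin hU (a := -δ)
    fun r s _ hr hs => by linarith [hgap r hr s hs]
  rw [neg_mul, neg_nonpos] at this
  exact nonneg_of_mul_nonneg_right this hδ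

end MonotoneCone

section LinearOrder

variable {ι : Type*} [LinearOrder ι] {v : EuclideanSpace ℝ ι}

theorem exists_forall_le_iff_apply_le [WellFoundedLT ι] (hv : v ∈ monotoneCone ι) (k : ι) :
    ∃ s ≤ k, ∀ r, s ≤ r ↔ v k ≤ v r := by
  have hU : IsUpperSet {r | v k ≤ v r} := fun a b hab ha => le_trans ha (hv a b hab)
  obtain h | ⟨s, hs⟩ := hU.eq_empty_or_Ici
  · exact (Set.eq_empty_iff_forall_notMem.1 h k (le_refl (v k))).elim
  · exact ⟨s, (Set.ext_iff.1 hs k).1 (le_refl (v k)), fun r => (Set.ext_iff.1 hs r).symm⟩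

theorem exists_forall_lt_iff_apply_lt [WellFoundedGT ι] (hv : v ∈ monotoneCone ι) (k : ι) :
    ∃ t ≥ k, ∀ r, t < r ↔ v k < v r := by
  have hL : IsLowerSet {r | v r ≤ v k} := fun a b hab ha => le_trans (hv b a hab) ha
  obtain h | ⟨t, ht⟩ := hL.eq_empty_or_Iic
  · exact (Set.eq_empty_iff_forall_notMem.1 h k (le_refl (v k))).elim
  · refine ⟨t, (Set.ext_iff.1 ht k).1 (le_refl (v k)), fun r => ?_⟩
    simpa using (Set.ext_iff.1 ht r).not.symm

end LinearOrder

theorem sum_Icc_eq_sum_Ici_sub_sum_Ioi {α M : Type*} [LinearOrder α] [LocallyFiniteOrder α]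
    [LocallyFiniteOrderTop α] [AddCommGroup M] (f : α → M) {s t : α} (hst : s ≤ t) :
    ∑ r ∈ Icc s t, f r = ∑ r ∈ Ici s, f r - ∑ r ∈ Ioi t, f r := by
  have hunion : Icc s t ∪ Ioi t = Ici s := by
    rw [← coe_inj, coe_union, coe_Icc, coe_Ioi, coe_Ici, Set.Icc_union_Ioi_eq_Ici hst]
  have hdisj : Disjoint (Icc s t) (Ioi t) :=
    disjoint_left.2 fun r hr hr' => (mem_Icc.1 hr).2.not_gt (mem_Ioi.1 hr')
  rw [eq_sub_iff_add_eq, ← sum_union hdisj, hunion]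

section BlockAvg

variable {n : ℕ} {y : Fin n → ℝ} {s t : Fin n} {c : ℝ}

theorem blockAvg_eq_sum_div_card (hst : s ≤ t) :
    blockAvg y s t = (∑ r ∈ Icc s t, y r) / #(Icc s t) := by
  rw [blockAvg, Fin.card_Icc]
  congr 3
  omega

theorem le_blockAvg_iff (hst : s ≤ t) : c ≤ blockAvg y s t ↔ 0 ≤ ∑ r ∈ Icc s t, (y r - c) := by
  rw [blockAvg_eq_sum_div_card hst, le_div_iff₀ (by simpa using hst), sum_sub_distrib, sum_const,
    nsmul_eq_mul, sub_nonneg, mul_comm]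

theorem blockAvg_le_iff (hst : s ≤ t) : blockAvg y s t ≤ c ↔ ∑ r ∈ Icc s t, (y r - c) ≤ 0 := by
  rw [blockAvg_eq_sum_div_card hst, div_le_iff₀ (by simpa using hst), sum_sub_distrib, sum_const,
    nsmul_eq_mul, sub_nonpos, mul_comm]

end BlockAvg

section Projection

variable {n : ℕ} {y yhat : EuclideanSpace ℝ (Fin n)} {s t : Fin n} {c : ℝ}

theorem le_blockAvg_of_forall_le_iff (hK : yhat ∈ monotoneCone (Fin n))
    (hmin : ∀ u ∈ monotoneCone (Fin n), ‖y - yhat‖ ≤ ‖y - u‖)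
    (hs : ∀ r, s ≤ r ↔ c ≤ yhat r) (hst : s ≤ t) : c ≤ blockAvg (fun r => y r) s t := by
  have hresid : 0 ≤ ∑ r ∈ Icc s t, (y r - yhat r) := by
    have hUs : ∑ r ∈ Ici s, (y r - yhat r) = 0 :=
      sum_sub_eq_zero_of_isUpperSet hK hmin (coe_Ici s ▸ isUpperSet_Ici s) fun r hr r' hr' =>
        (not_le.1 (mt (hs r).2 (by simpa using hr))).trans_le ((hs r').1 (by simpa using hr'))
    have hUt := sum_sub_nonpos_of_isUpperSet hK hmin (y := y) (coe_Ioi t ▸ isUpperSet_Ioi t)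
    rw [sum_Icc_eq_sum_Ici_sub_sum_Ioi _ hst, hUs]
    linarith
  have hfit : 0 ≤ ∑ r ∈ Icc s t, (yhat r - c) :=
    sum_nonneg fun r hr => sub_nonneg.2 ((hs r).1 (mem_Icc.1 hr).1)
  rw [le_blockAvg_iff hst]
  simpa [← sum_add_distrib] using add_nonneg hresid hfit

theorem blockAvg_le_of_forall_lt_iff (hK : yhat ∈ monotoneCone (Fin n))
    (hmin : ∀ u ∈ monotoneCone (Fin n), ‖y - yhat‖ ≤ ‖y - u‖)
    (ht : ∀ r, t < r ↔ c < yhat r) (hst : s ≤ t) : blockAvg (fun r => y r) s t ≤ c := by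
  have hresid : ∑ r ∈ Icc s t, (y r - yhat r) ≤ 0 := by
    have hUt : ∑ r ∈ Ioi t, (y r - yhat r) = 0 :=
      sum_sub_eq_zero_of_isUpperSet hK hmin (coe_Ioi t ▸ isUpperSet_Ioi t) fun r hr r' hr' =>
        (not_lt.1 (mt (ht r).2 (by simpa using hr))).trans_lt ((ht r').1 (by simpa using hr'))
    have hUs := sum_sub_nonpos_of_isUpperSet hK hmin (y := y) (coe_Ici s ▸ isUpperSet_Ici s)
    rw [sum_Icc_eq_sum_Ici_sub_sum_Ioi _ hst, hUt]
    linarith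
  have hfit : ∑ r ∈ Icc s t, (yhat r - c) ≤ 0 :=
    sum_nonpos fun r hr => sub_nonpos.2 (not_lt.1 (mt (ht r).2 (mem_Icc.1 hr).2.not_gt))
  rw [blockAvg_le_iff hst]
  simpa [← sum_add_distrib] using add_nonpos hresid hfit

end Projection

theorem isotonic_minmax_formula_general (n : ℕ)
    (y yhat : EuclideanSpace ℝ (Fin n))
    (hK : yhat ∈ {v : EuclideanSpace ℝ (Fin n) | ∀ r s : Fin n, r ≤ s → v r ≤ v s})
    (hmin : ∀ u ∈ {v : EuclideanSpace ℝ (Fin n) | ∀ r s : Fin n, r ≤ s → v r ≤ v s},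
      ‖y - yhat‖ ≤ ‖y - u‖) (k : Fin n) :
    yhat k =
      (Finset.Iic k).sup' ⟨k, Finset.mem_Iic.mpr le_rfl⟩ (fun s =>
        (Finset.Ici k).inf' ⟨k, Finset.mem_Ici.mpr le_rfl⟩ (fun t =>
          blockAvg (fun r => y r) s t)) := by
  obtain ⟨s₀, hs₀k, hs₀⟩ := exists_forall_le_iff_apply_le hK k
  obtain ⟨t₀, hkt₀, ht₀⟩ := exists_forall_lt_iff_apply_lt hK k
  apply le_antisymm
  · refine le_sup'_of_le _ (mem_Iic.2 hs₀k) (le_inf' _ _ fun t ht => ?_)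
    exact le_blockAvg_of_forall_le_iff hK hmin hs₀ (hs₀k.trans (mem_Ici.1 ht))
  · refine sup'_le _ _ fun s hs => inf'_le_of_le _ (mem_Ici.2 hkt₀) ?_
    exact blockAvg_le_of_forall_lt_iff hK hmin ht₀ ((mem_Iic.1 hs).trans hkt₀)

/-- Min–max characterization of isotonic regression (correctness of PAVA): each fitted
value is `max_{s ≤ k} min_{t ≥ k}` of the block average of `y` from `s` to `t`. -/
theorem isotonic_minmax_formula (n : ℕ) (hn : 1 ≤ n)
    (y yhat : EuclideanSpace ℝ (Fin n))
    (hK : yhat ∈ {v : EuclideanSpace ℝ (Fin n) | ∀ r s : Fin n, r ≤ s → v r ≤ v s})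
    (hmin : ∀ u ∈ {v : EuclideanSpace ℝ (Fin n) | ∀ r s : Fin n, r ≤ s → v r ≤ v s},
      ‖y - yhat‖ ≤ ‖y - u‖) (k : Fin n) :
    yhat k =
      (Finset.Iic k).sup' ⟨k, Finset.mem_Iic.mpr le_rfl⟩ (fun s =>
        (Finset.Ici k).inf' ⟨k, Finset.mem_Ici.mpr le_rfl⟩ (fun t =>
          blockAvg (fun r => y r) s t)) :=
  isotonic_minmax_formula_general n y yhat hK hmin k
end

section
/- Let n ≥ 1 and x, y : Fin n → ℝ. Suppose y r = g (x r) for all r, where g : ℝ → ℝ is strictly decreasing (strictly antitone), and suppose x is non-constant. Then: (i) the infimum over non-increasing f : ℝ → ℝ of ∑_{r} (y r − f (x r))² equals 0; (ii) the infimum over non-decreasing f : ℝ → ℝ of ∑_{r} (y r − f (x r))² is strictly positive; consequently the signed monotone coefficient S², defined as +1·(1 − MSE↑/SST(y)) when MSE↑ ≤ MSE↓ and −1·(1 − MSE↓/SST(y)) otherwise, equals −1. (A perfectly inverted relationship, as produced by a miskeyed item, yields signed coefficient −1.) -/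
/-- Sum of squared errors of predictor `f` for regressing `y` on `x`. -/
noncomputable def sse {n : ℕ} (x y : Fin n → ℝ) (f : ℝ → ℝ) : ℝ :=
  ∑ r, (y r - f (x r)) ^ 2

/-- Mean of a data vector. -/
noncomputable def mean {n : ℕ} (y : Fin n → ℝ) : ℝ := (1 / n) * ∑ r, y r

/-- Total sum of squares of a data vector. -/
noncomputable def sst {n : ℕ} (y : Fin n → ℝ) : ℝ := ∑ r, (y r - mean y) ^ 2

/-- Minimal SSE over non-decreasing predictors. -/
noncomputable def mseUp {n : ℕ} (x y : Fin n → ℝ) : ℝ :=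
  sInf {e : ℝ | ∃ f : ℝ → ℝ, Monotone f ∧ e = sse x y f}

/-- Minimal SSE over non-increasing predictors. -/
noncomputable def mseDown {n : ℕ} (x y : Fin n → ℝ) : ℝ :=
  sInf {e : ℝ | ∃ f : ℝ → ℝ, Antitone f ∧ e = sse x y f}

/-- The signed monotone coefficient. -/
noncomputable def signedS2 {n : ℕ} (x y : Fin n → ℝ) : ℝ :=
  if mseUp x y ≤ mseDown x y then 1 - mseUp x y / sst y else -(1 - mseDown x y / sst y)

/- A perfectly inverted relationship is fitted exactly by the antitone predictor `g` itself,
so `MSE↓ = 0`. Any monotone predictor must mispredict one of two points `x a < x b`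
with `y b < y a`: whatever the fitted values `p ≤ q` are, the two residuals differ by at least
`y a - y b`, so their squares sum to at least `(y a - y b)² / 2 > 0`. Hence `MSE↓ < MSE↑`
and `S² = -(1 - 0 / SST) = -1`. -/

lemma half_sq_sub_le_sq_add_sq {u v p q : ℝ} (hvu : v ≤ u) (hpq : p ≤ q) :
    (u - v) ^ 2 / 2 ≤ (u - p) ^ 2 + (v - q) ^ 2 := by
  nlinarith [sq_nonneg (u - p + (v - q)), mul_nonneg (sub_nonneg.2 hvu) (sub_nonneg.2 hpq)]

section SSE

variable {n : ℕ} (x y : Fin n → ℝ)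

lemma sse_nonneg (f : ℝ → ℝ) : 0 ≤ sse x y f :=
  Finset.sum_nonneg fun _ _ => sq_nonneg _

lemma sse_eq_zero_of_forall_eq {f : ℝ → ℝ} (hf : ∀ r, y r = f (x r)) : sse x y f = 0 :=
  Finset.sum_eq_zero fun r _ => by rw [hf r, sub_self, sq, mul_zero]

lemma sq_add_sq_le_sse {a b : Fin n} (hab : a ≠ b) (f : ℝ → ℝ) :
    (y a - f (x a)) ^ 2 + (y b - f (x b)) ^ 2 ≤ sse x y f := by
  rw [← Finset.sum_pair (f := fun r => (y r - f (x r)) ^ 2) hab]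
  exact Finset.sum_le_sum_of_subset_of_nonneg (Finset.subset_univ _)
    fun _ _ _ => sq_nonneg _

lemma mseDown_eq_zero_of_forall_eq {g : ℝ → ℝ} (hg : Antitone g) (hgy : ∀ r, y r = g (x r)) :
    mseDown x y = 0 := by
  refine IsLeast.csInf_eq ⟨⟨g, hg, (sse_eq_zero_of_forall_eq x y hgy).symm⟩, ?_⟩
  rintro e ⟨f, -, rfl⟩
  exact sse_nonneg x y f

lemma mseUp_pos_of_lt {a b : Fin n} (hx : x a < x b) (hy : y b < y a) : 0 < mseUp x y := by
  have hab : a ≠ b := by rintro rfl; exact hx.false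
  have hgap : 0 < (y a - y b) ^ 2 / 2 := by
    have := sub_pos.2 hy
    positivity
  refine hgap.trans_le (le_csInf ⟨_, fun _ => 0, monotone_const, rfl⟩ ?_)
  rintro e ⟨f, hf, rfl⟩
  exact (half_sq_sub_le_sq_add_sq hy.le (hf hx.le)).trans (sq_add_sq_le_sse x y hab f)

lemma signedS2_eq_neg_one (hDown : mseDown x y = 0) (hUp : 0 < mseUp x y) :
    signedS2 x y = -1 := by
  rw [signedS2, if_neg (by rw [hDown]; exact hUp.not_ge), hDown, zero_div, sub_zero]

end SSE

theorem signed_coefficient_neg_one_of_inverted_general (n : ℕ) (x y : Fin n → ℝ)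
    (g : ℝ → ℝ) (hg : StrictAnti g) (hgy : ∀ r, y r = g (x r))
    (hxnc : ∃ r s, x r ≠ x s) :
    mseDown x y = 0 ∧ 0 < mseUp x y ∧ signedS2 x y = -1 := by
  have hDown : mseDown x y = 0 := mseDown_eq_zero_of_forall_eq x y hg.antitone hgy
  obtain ⟨a, b, hx⟩ : ∃ a b, x a < x b := by
    obtain ⟨r, s, hrs⟩ := hxnc
    rcases hrs.lt_or_gt with h | h
    exacts [⟨r, s, h⟩, ⟨s, r, h⟩]
  have hUp : 0 < mseUp x y := mseUp_pos_of_lt x y hx (by rw [hgy, hgy]; exact hg hx)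
  exact ⟨hDown, hUp, signedS2_eq_neg_one x y hDown hUp⟩

/-- A perfectly inverted (strictly decreasing) relationship, as produced by a miskeyed
item, has antitonic SSE `0`, strictly positive isotonic SSE, and signed coefficient `-1`. -/
theorem signed_coefficient_neg_one_of_inverted (n : ℕ) (hn : 1 ≤ n) (x y : Fin n → ℝ)
    (hSST : 0 < sst y) (g : ℝ → ℝ) (hg : StrictAnti g) (hgy : ∀ r, y r = g (x r))
    (hxnc : ∃ r s, x r ≠ x s) :
    mseDown x y = 0 ∧ 0 < mseUp x y ∧ signedS2 x y = -1 :=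
  signed_coefficient_neg_one_of_inverted_general n x y g hg hgy hxnc
end
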